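/- arXiv:1407.7603 — 2 statements merged into one kernel-verified Lean document; each statement's English description precedes it below -/
import Mathlib

section
/- Let Ω ⊆ ℝ^d be open and let f : Ω → ℝ be bounded and Lebesgue measurable, satisfying the logarithmic Campanato condition with constants C > 0 and α > 1, i.e. ∫_{B_r(x)} |f(y) − f̄_{x,r}|² dy ≤ C r^d / |log₂ r|^{2α} for every x ∈ Ω and every 0 < r < 1/2 with B_r(x) ⊆ Ω, where f̄_{x,r} := (1/|B_r(x)|) ∫_{B_r(x)} f(y) dy. Then there is a constant C'' > 0 depending only on C, d and α such that for every x ∈ Ω and all radii 0 < ρ < r < min(dist(x, ∂Ω), 1/2), |f̄_{x,ρ} − f̄_{x,r}| ≤ C'' / |log₂ r|^{α−1}. -/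
open MeasureTheory

noncomputable def ballAvg {d : ℕ} (f : EuclideanSpace ℝ (Fin d) → ℝ)
    (x : EuclideanSpace ℝ (Fin d)) (r : ℝ) : ℝ :=
  (volume (Metric.ball x r)).toReal⁻¹ * ∫ y in Metric.ball x r, f y

open Metric Set

/-! By Jensen's inequality, the averages of `f` over `B_t(x) ⊆ B_s(x)` with `s ≤ 2t` differ by
at most `|B_t|^(-1/2)` times the `L²` oscillation of `f` on `B_s(x)`; on the dyadic ball
`B_{r/2^k}(x)` the Campanato condition makes this `K (|log₂ r| + k)^(-α)` with
`K = √(2^d C / |B_1|)`. Telescoping from `r` down to `ρ` and comparing the sum with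
`∫_{|log₂ r|}^∞ u^(-α) du` gives `|f̄_{x,ρ} - f̄_{x,r}| ≤ (1 + 1/(α-1)) K / |log₂ r|^(α-1)`. -/

theorem sum_range_succ_rpow_neg_le {α L : ℝ} (hα : 1 < α) (hL : 1 ≤ L) (N : ℕ) :
    ∑ k ∈ Finset.range (N + 1), (L + k) ^ (-α) ≤ (1 + 1 / (α - 1)) * L ^ (1 - α) := by
  have hL0 : 0 < L := by linarith
  have hanti : AntitoneOn (fun x : ℝ => x ^ (-α)) (Icc L (L + N)) := fun a ha b _ hab =>
    Real.rpow_le_rpow_of_nonpos (hL0.trans_le ha.1) hab (by linarith)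
  have hint : ∫ x in L..L + N, x ^ (-α) = (L ^ (1 - α) - (L + N) ^ (1 - α)) / (α - 1) := by
    have h0 : (0 : ℝ) ∉ uIcc L (L + N) := by
      rw [uIcc_of_le (by simp)]; exact fun h => hL0.not_ge h.1
    rw [integral_rpow (Or.inr ⟨by linarith, h0⟩), show -α + 1 = -(α - 1) by ring,
      show 1 - α = -(α - 1) by ring, div_neg, ← neg_div, neg_sub]
  calc ∑ k ∈ Finset.range (N + 1), (L + k) ^ (-α)
      = ∑ k ∈ Finset.range N, (L + ↑(k + 1)) ^ (-α) + L ^ (-α) := by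
        rw [Finset.sum_range_succ', Nat.cast_zero, add_zero]
    _ ≤ (L ^ (1 - α) - (L + N) ^ (1 - α)) / (α - 1) + L ^ (1 - α) := by
        gcongr
        · exact hint ▸ hanti.sum_le_integral
        · linarith
    _ ≤ L ^ (1 - α) / (α - 1) + L ^ (1 - α) := by
        gcongr
        exact sub_le_self _ (by positivity)
    _ = (1 + 1 / (α - 1)) * L ^ (1 - α) := by ring

theorem exists_dist_le_sum_of_dyadic_steps {E : Type*} [PseudoMetricSpace E] (g : ℝ → E)
    (b : ℕ → ℝ) {ρ r : ℝ} (hρ : 0 < ρ) (hρr : ρ ≤ r)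
    (hstep : ∀ (k : ℕ) (t : ℝ), r / 2 ^ (k + 1) ≤ t → t ≤ r / 2 ^ k →
      dist (g t) (g (r / 2 ^ k)) ≤ b k) :
    ∃ N : ℕ, dist (g ρ) (g r) ≤ ∑ k ∈ Finset.range (N + 1), b k := by
  obtain ⟨N, hN, hN'⟩ := exists_nat_pow_near ((one_le_div hρ).2 hρr) one_lt_two
  have hρN : r / 2 ^ (N + 1) ≤ ρ := by
    rw [div_le_iff₀ (by positivity), ← div_le_iff₀' hρ]; exact hN'.le
  have hρN' : ρ ≤ r / 2 ^ N := by rwa [le_div_iff₀ (by positivity), mul_comm, ← le_div_iff₀ hρ]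
  refine ⟨N, ?_⟩
  calc dist (g ρ) (g r)
      ≤ dist (g ρ) (g (r / 2 ^ N)) + dist (g (r / 2 ^ N)) (g (r / 2 ^ 0)) := by
        simpa using dist_triangle (g ρ) (g (r / 2 ^ N)) (g r)
    _ ≤ b N + ∑ k ∈ Finset.range N, dist (g (r / 2 ^ (k + 1))) (g (r / 2 ^ k)) := by
        gcongr
        · exact hstep N ρ hρN hρN'
        · rw [dist_comm]
          simpa only [dist_comm] using dist_le_range_sum_dist (fun k => g (r / 2 ^ k)) N
    _ ≤ ∑ k ∈ Finset.range (N + 1), b k := by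
        rw [Finset.sum_range_succ, add_comm]
        gcongr with k
        refine hstep k _ le_rfl ?_
        gcongr
        · linarith
        · norm_num
        · omega

theorem Metric.ball_subset_of_le_infDist_frontier {E : Type*} [NormedAddCommGroup E]
    [NormedSpace ℝ E] {Ω : Set E} {x : E} {r : ℝ} (hx : x ∈ Ω)
    (hr : r ≤ infDist x (frontier Ω)) : ball x r ⊆ Ω := by
  rcases le_or_gt r 0 with hr₀ | hr₀
  · simp [ball_eq_empty.2 hr₀]
  have hfr : ∀ z ∈ ball x r, z ∉ frontier Ω := fun z hz hzΩ =>
    (infDist_le_dist_of_mem hzΩ).not_gt (hr.trans_lt' (by rwa [dist_comm, ← mem_ball]))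
  have hint : ∀ z ∈ ball x r, z ∈ closure Ω → z ∈ interior Ω := fun z hz hzΩ => by
    by_contra h; exact hfr z hz ⟨hzΩ, h⟩
  refine Subset.trans ?_ interior_subset
  refine (convex_ball x r).isPreconnected.subset_of_closure_inter_subset isOpen_interior
    ⟨x, mem_ball_self hr₀, hint x (mem_ball_self hr₀) (subset_closure hx)⟩ ?_
  rintro z ⟨hz, hzb⟩
  exact hint z hzb (closure_mono interior_subset hz)

theorem abs_logb_two_div_two_pow {r : ℝ} (hr₀ : 0 < r) (hr₁ : r ≤ 1) (k : ℕ) :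
    |Real.logb 2 (r / 2 ^ k)| = |Real.logb 2 r| + k := by
  have hlog : Real.logb 2 r ≤ 0 := Real.logb_nonpos one_lt_two hr₀.le hr₁
  rw [Real.logb_div hr₀.ne' (by positivity), Real.logb_pow, Real.logb_self_eq_one one_lt_two,
    mul_one, abs_of_nonpos hlog, abs_of_nonpos (by linarith [k.cast_nonneg (α := ℝ)])]
  ring

section Average

variable {X : Type*} [MeasurableSpace X] {μ : Measure X} {A S : Set X} {g : X → ℝ}

theorem setAverage_sub_const (hA₀ : μ A ≠ 0) (hA : μ A ≠ ⊤) (hg : IntegrableOn g A μ) (c : ℝ) :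
    ⨍ x in A, (g x - c) ∂μ = ⨍ x in A, g x ∂μ - c := by
  rw [setAverage_eq, setAverage_eq, integral_sub hg (integrableOn_const hA), setIntegral_const,
    smul_sub, inv_smul_smul₀ (measureReal_ne_zero_iff hA |>.2 hA₀)]

theorem sq_setAverage_le_of_subset (hAS : A ⊆ S) (hA₀ : μ A ≠ 0) (hA : μ A ≠ ⊤)
    (hg : MemLp g 2 (μ.restrict S)) :
    (⨍ x in A, g x ∂μ) ^ 2 ≤ (∫ x in S, g x ^ 2 ∂μ) / μ.real A := by
  have : IsFiniteMeasure (μ.restrict A) := isFiniteMeasure_restrict.2 hA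
  have hgA : MemLp g 2 (μ.restrict A) := hg.mono_measure (Measure.restrict_mono hAS le_rfl)
  calc (⨍ x in A, g x ∂μ) ^ 2 ≤ ⨍ x in A, g x ^ 2 ∂μ :=
        (even_two.convexOn_pow).map_set_average_le (continuous_pow 2).continuousOn isClosed_univ
          hA₀ hA (by simp) (hgA.integrable one_le_two) hgA.integrable_sq
    _ = (∫ x in A, g x ^ 2 ∂μ) / μ.real A := by rw [setAverage_eq, smul_eq_mul, inv_mul_eq_div]
    _ ≤ (∫ x in S, g x ^ 2 ∂μ) / μ.real A := by
        refine div_le_div_of_nonneg_right ?_ measureReal_nonneg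
        exact setIntegral_mono_set hg.integrable_sq (.of_forall fun x => sq_nonneg _)
          hAS.eventuallyLE

end Average

section Ball

variable {d : ℕ} {f : EuclideanSpace ℝ (Fin d) → ℝ} {x : EuclideanSpace ℝ (Fin d)}

theorem ballAvg_eq_setAverage (f : EuclideanSpace ℝ (Fin d) → ℝ) (x : EuclideanSpace ℝ (Fin d))
    (r : ℝ) : ballAvg f x r = ⨍ y in ball x r, f y := by
  rw [setAverage_eq, smul_eq_mul]; rfl

theorem abs_ballAvg_sub_le {t s : ℝ} (ht : 0 < t) (hts : t ≤ s)
    (hf : MemLp f 2 (volume.restrict (ball x s))) (c : ℝ) :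
    |ballAvg f x t - c| ≤ √((∫ y in ball x s, (f y - c) ^ 2) / volume.real (ball x t)) := by
  have : IsFiniteMeasure (volume.restrict (ball x s)) :=
    isFiniteMeasure_restrict.2 measure_ball_lt_top.ne
  have hts' : ball x t ⊆ ball x s := ball_subset_ball hts
  have ht₀ : volume (ball x t) ≠ 0 := (measure_ball_pos volume x ht).ne'
  have hfc : MemLp (fun y => f y - c) 2 (volume.restrict (ball x s)) := hf.sub (memLp_const c)
  have hft : IntegrableOn f (ball x t) :=
    IntegrableOn.mono_set (hf.integrable one_le_two) hts'
  rw [← Real.sqrt_sq_eq_abs, ballAvg_eq_setAverage,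
    ← setAverage_sub_const ht₀ measure_ball_lt_top.ne hft]
  exact Real.sqrt_le_sqrt (sq_setAverage_le_of_subset hts' ht₀ measure_ball_lt_top.ne hfc)

theorem measureReal_ball_eq (x : EuclideanSpace ℝ (Fin d)) {t : ℝ} (ht : 0 < t) :
    volume.real (ball x t) = t ^ d * volume.real (ball (0 : EuclideanSpace ℝ (Fin d)) 1) := by
  rw [measureReal_def, Measure.addHaar_ball_of_pos volume x ht, ENNReal.toReal_mul,
    ENNReal.toReal_ofReal (by positivity), finrank_euclideanSpace_fin, measureReal_def]

theorem abs_ballAvg_sub_ballAvg_le {t s M : ℝ} (ht : 0 < t) (hts : t ≤ s) (hst : s ≤ 2 * t)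
    (hf : MemLp f 2 (volume.restrict (ball x s)))
    (hM : ∫ y in ball x s, (f y - ballAvg f x s) ^ 2 ≤ M * s ^ d) :
    |ballAvg f x t - ballAvg f x s| ≤
      √(2 ^ d * M / volume.real (ball (0 : EuclideanSpace ℝ (Fin d)) 1)) := by
  set ω := volume.real (ball (0 : EuclideanSpace ℝ (Fin d)) 1)
  have hω : 0 < ω :=
    ENNReal.toReal_pos (measure_ball_pos volume 0 one_pos).ne' measure_ball_lt_top.ne
  have hs : 0 < s := ht.trans_le hts
  have hM₀ : 0 ≤ M := nonneg_of_mul_nonneg_left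
    ((setIntegral_nonneg measurableSet_ball fun y _ => sq_nonneg _).trans hM) (by positivity)
  have hsd : s ^ d ≤ 2 ^ d * t ^ d := by rw [← mul_pow]; gcongr
  calc |ballAvg f x t - ballAvg f x s|
      ≤ √((∫ y in ball x s, (f y - ballAvg f x s) ^ 2) / volume.real (ball x t)) :=
        abs_ballAvg_sub_le ht hts hf _
    _ ≤ √(M * s ^ d / (t ^ d * ω)) := by rw [measureReal_ball_eq x ht]; gcongr
    _ ≤ √(2 ^ d * M / ω) := by
        refine Real.sqrt_le_sqrt ?_
        rw [div_le_div_iff₀ (by positivity) hω]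
        calc M * s ^ d * ω ≤ M * (2 ^ d * t ^ d) * ω := by gcongr
          _ = 2 ^ d * M * (t ^ d * ω) := by ring

theorem abs_ballAvg_sub_ballAvg_le_of_campanato {t s B C α : ℝ}
    (hf : AEStronglyMeasurable f (volume.restrict (ball x s))) (hB : ∀ y ∈ ball x s, |f y| ≤ B)
    (ht : 0 < t) (hts : t ≤ s) (hst : s ≤ 2 * t)
    (hCam : ∫ y in ball x s, (f y - ballAvg f x s) ^ 2 ≤ C * s ^ d / |Real.logb 2 s| ^ (2 * α)) :
    |ballAvg f x t - ballAvg f x s| ≤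
      √(2 ^ d * C / volume.real (ball (0 : EuclideanSpace ℝ (Fin d)) 1)) *
        |Real.logb 2 s| ^ (-α) := by
  have : IsFiniteMeasure (volume.restrict (ball x s)) :=
    isFiniteMeasure_restrict.2 measure_ball_lt_top.ne
  have hf₂ : MemLp f 2 (volume.restrict (ball x s)) :=
    MemLp.of_bound hf B <| (ae_restrict_mem measurableSet_ball).mono hB
  rw [mul_div_right_comm] at hCam
  refine (abs_ballAvg_sub_ballAvg_le ht hts hst hf₂ hCam).trans_eq ?_
  rw [mul_comm 2 α, Real.rpow_mul (abs_nonneg _), Real.rpow_neg (abs_nonneg _), Real.rpow_two,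
    ← Real.sqrt_sq (inv_nonneg.2 (Real.rpow_nonneg (abs_nonneg _) α)),
    ← Real.sqrt_mul' _ (sq_nonneg _)]
  ring_nf

end Ball

theorem campanato_dyadic_telescoping
    (d : ℕ) (C α : ℝ) (hC : 0 < C) (hα : 1 < α) :
    ∃ C'' > (0 : ℝ),
      ∀ (Ω : Set (EuclideanSpace ℝ (Fin d))), IsOpen Ω →
      ∀ (f : EuclideanSpace ℝ (Fin d) → ℝ), Measurable f →
        (∃ B, ∀ x ∈ Ω, |f x| ≤ B) →
        (∀ x ∈ Ω, ∀ r : ℝ, 0 < r → r < 1 / 2 → Metric.ball x r ⊆ Ω →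
          ∫ y in Metric.ball x r, (f y - ballAvg f x r) ^ 2 ≤
            C * r ^ d / |Real.logb 2 r| ^ (2 * α)) →
        ∀ x ∈ Ω, ∀ ρ r : ℝ, 0 < ρ → ρ < r →
          r < min (Metric.infDist x (frontier Ω)) (1 / 2) →
          |ballAvg f x ρ - ballAvg f x r| ≤ C'' / |Real.logb 2 r| ^ (α - 1) := by
  set K := √(2 ^ d * C / volume.real (ball (0 : EuclideanSpace ℝ (Fin d)) 1))
  have hK : 0 < K := Real.sqrt_pos.2 <| div_pos (by positivity) <|
    ENNReal.toReal_pos (measure_ball_pos volume 0 one_pos).ne' measure_ball_lt_top.ne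
  refine ⟨(1 + 1 / (α - 1)) * K, by have := sub_pos.2 hα; positivity, ?_⟩
  intro Ω _ f hf ⟨B, hB⟩ hCam x hx ρ r hρ hρr hr
  obtain ⟨hrΩ, hr₂⟩ := lt_min_iff.1 hr
  have hr₀ : 0 < r := hρ.trans hρr
  have hball : ball x r ⊆ Ω := ball_subset_of_le_infDist_frontier hx hrΩ.le
  set L := |Real.logb 2 r|
  have hL : 1 ≤ L := by
    have : Real.logb 2 r < -1 := by
      simpa using Real.logb_lt_logb one_lt_two (hρ.trans hρr) hr₂
    exact le_abs.2 (Or.inr (by linarith))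
  have hstep : ∀ (k : ℕ) (t : ℝ), r / 2 ^ (k + 1) ≤ t → t ≤ r / 2 ^ k →
      dist (ballAvg f x t) (ballAvg f x (r / 2 ^ k)) ≤ K * (L + k) ^ (-α) := by
    intro k t ht₁ ht₂
    have hsr : r / 2 ^ k ≤ r := div_le_self hr₀.le (one_le_pow₀ one_le_two)
    have hsΩ : ball x (r / 2 ^ k) ⊆ Ω := (ball_subset_ball hsr).trans hball
    have hst : r / 2 ^ k ≤ 2 * t := by rw [pow_succ, ← div_div] at ht₁; linarith
    rw [Real.dist_eq, ← abs_logb_two_div_two_pow hr₀ (by linarith) k]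
    exact abs_ballAvg_sub_ballAvg_le_of_campanato hf.aestronglyMeasurable
      (fun y hy => hB y (hsΩ hy)) (lt_of_lt_of_le (by positivity) ht₁) ht₂ hst
      (hCam x hx _ (by positivity) (hsr.trans_lt hr₂) hsΩ)
  obtain ⟨N, hN⟩ := exists_dist_le_sum_of_dyadic_steps (ballAvg f x) _ hρ hρr.le hstep
  calc |ballAvg f x ρ - ballAvg f x r| ≤ ∑ k ∈ Finset.range (N + 1), K * (L + k) ^ (-α) := hN
    _ = K * ∑ k ∈ Finset.range (N + 1), (L + k) ^ (-α) := by rw [Finset.mul_sum]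
    _ ≤ K * ((1 + 1 / (α - 1)) * L ^ (1 - α)) := by
        gcongr; exact sum_range_succ_rpow_neg_le hα hL N
    _ = (1 + 1 / (α - 1)) * K / L ^ (α - 1) := by
        rw [show 1 - α = -(α - 1) by ring, Real.rpow_neg (by positivity)]; ring
end

section
/- Let Ω ⊆ ℝ^d be open and let f : Ω → ℝ be bounded and Lebesgue measurable, satisfying the logarithmic Campanato condition with constants C > 0 and α > 1, i.e. ∫_{B_r(x)} |f(y) − f̄_{x,r}|² dy ≤ C r^d / |log₂ r|^{2α} for every x ∈ Ω and every 0 < r < 1/2 with B_r(x) ⊆ Ω, where f̄_{x,r} := (1/|B_r(x)|) ∫_{B_r(x)} f(y) dy. Then there is a constant C''' > 0 depending only on C and d such that for all x, y ∈ Ω with x ≠ y, writing r := |x − y|, if 2r < 1/2 and the balls B_{2r}(x) and B_{2r}(y) are contained in Ω, then |f̄_{x,2r} − f̄_{y,2r}| ≤ C''' / |log₂ r|^{α}. -/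
/-!
Let `r = |x - y|` and let `m` be the midpoint of `x` and `y`. The ball `B_r(m)` lies in both
`B_{2r}(x)` and `B_{2r}(y)`; averaging `|f̄_{x,2r} - f̄_{y,2r}| ≤ |f - f̄_{x,2r}| + |f - f̄_{y,2r}|`
over it bounds `|B_r| |f̄_{x,2r} - f̄_{y,2r}|` by the mean oscillations of `f` on the two big
balls. By Cauchy–Schwarz the Campanato condition bounds each of these by
`|B_{2r}| √(C / |B_1|) / |log₂ 2r|^α`; conclude with `|B_{2r}| = 2^d |B_r|` and
`|log₂ r| ≤ 2 |log₂ 2r|`.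
-/

open MeasureTheory

open Metric

section Logarithms

open Real

lemma abs_logb_eq_abs_logb_two_mul_add_one {r : ℝ} (hr₀ : 0 < r) (hr : r ≤ 1 / 2) :
    |logb 2 r| = |logb 2 (2 * r)| + 1 := by
  have hlog₂ : logb 2 (2 * r) = 1 + logb 2 r := by
    rw [logb_mul (by norm_num) hr₀.ne', logb_self_eq_one one_lt_two]
  have hlog : logb 2 (2 * r) ≤ 0 := logb_nonpos one_lt_two (by positivity) (by linarith)
  rw [hlog₂] at hlog ⊢
  rw [abs_of_nonpos hlog, abs_of_neg (by linarith)]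
  ring

lemma one_le_abs_logb_two_mul {r : ℝ} (hr₀ : 0 < r) (hr : r ≤ 1 / 4) :
    1 ≤ |logb 2 (2 * r)| := by
  have hlog : logb 2 (2 * r) ≤ -1 := by
    calc logb 2 (2 * r) ≤ logb 2 (2 ^ (-1 : ℝ)) :=
          logb_le_logb_of_le (by norm_num) (by positivity) (by norm_num; linarith)
      _ = -1 := logb_rpow (by norm_num) (by norm_num)
  exact le_abs.2 (Or.inr (by linarith))

lemma inv_rpow_abs_logb_two_mul_le {r α : ℝ} (hr₀ : 0 < r) (hr : r ≤ 1 / 4) (hα : 0 ≤ α) :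
    (|logb 2 (2 * r)| ^ α)⁻¹ ≤ 2 ^ α / |logb 2 r| ^ α := by
  have hM := one_le_abs_logb_two_mul hr₀ hr
  have hL := abs_logb_eq_abs_logb_two_mul_add_one hr₀ (by linarith)
  rw [← inv_rpow (by positivity), ← div_rpow (by norm_num) (by positivity)]
  refine rpow_le_rpow (by positivity) ?_ hα
  rw [hL, inv_eq_one_div, div_le_div_iff₀ (by positivity) (by positivity)]
  linarith

end Logarithms

section Averages

variable {X : Type*} [MeasurableSpace X] {μ : Measure X}

lemma setIntegral_abs_le_of_setIntegral_sq_le {s : Set X} {g : X → ℝ} {ε : ℝ} (hs : μ s ≠ ⊤)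
    (hg : MemLp g 2 (μ.restrict s)) (hε : 0 < ε)
    (h : ∫ x in s, g x ^ 2 ∂μ ≤ μ.real s * ε ^ 2) :
    ∫ x in s, |g x| ∂μ ≤ μ.real s * ε := by
  have := isFiniteMeasure_restrict.2 hs
  have hg₁ : IntegrableOn g s μ := hg.integrable one_le_two
  have hamgm : ∀ x, 2 * ε * |g x| ≤ g x ^ 2 + ε ^ 2 := fun x => by
    nlinarith [sq_nonneg (|g x| - ε), sq_abs (g x)]
  have hint : 2 * ε * ∫ x in s, |g x| ∂μ ≤ ∫ x in s, g x ^ 2 ∂μ + μ.real s * ε ^ 2 := by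
    rw [← integral_const_mul, ← smul_eq_mul (μ.real s), ← setIntegral_const,
      ← integral_add hg.integrable_sq (integrable_const _)]
    exact integral_mono (hg₁.abs.const_mul _) (hg.integrable_sq.add (integrable_const _)) hamgm
  nlinarith

lemma measureReal_mul_abs_sub_le {f : X → ℝ} {S U V : Set X} {a b : ℝ} (hSU : S ⊆ U) (hSV : S ⊆ V)
    (hU : IntegrableOn (fun x => f x - a) U μ) (hV : IntegrableOn (fun x => f x - b) V μ) :
    μ.real S * |a - b| ≤ ∫ x in U, |f x - a| ∂μ + ∫ x in V, |f x - b| ∂μ := by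
  have hconst : ∫ x in S, (f x - b) ∂μ - ∫ x in S, (f x - a) ∂μ = μ.real S * (a - b) := by
    rw [← integral_sub (hV.mono_set hSV) (hU.mono_set hSU), ← smul_eq_mul, ← setIntegral_const]
    congr 1 with x
    ring
  have hmono : ∀ {T : Set X} {c : ℝ}, S ⊆ T → IntegrableOn (fun x => f x - c) T μ →
      |∫ x in S, (f x - c) ∂μ| ≤ ∫ x in T, |f x - c| ∂μ := fun hST hT =>
    abs_integral_le_integral_abs.trans <|
      setIntegral_mono_set hT.abs (.of_forall fun _ => abs_nonneg _) hST.eventuallyLE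
  calc μ.real S * |a - b| = |∫ x in S, (f x - b) ∂μ - ∫ x in S, (f x - a) ∂μ| := by
        rw [hconst, abs_mul, abs_of_nonneg measureReal_nonneg]
    _ ≤ |∫ x in S, (f x - a) ∂μ| + |∫ x in S, (f x - b) ∂μ| :=
        (abs_sub _ _).trans_eq (add_comm _ _)
    _ ≤ _ := add_le_add (hmono hSU hU) (hmono hSV hV)

lemma memLp_restrict_of_abs_le {s : Set X} {f : X → ℝ} {B : ℝ} (p : ENNReal) (hs : μ s ≠ ⊤)
    (hsm : MeasurableSet s) (hf : Measurable f) (hB : ∀ x ∈ s, |f x| ≤ B) :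
    MemLp f p (μ.restrict s) :=
  have := isFiniteMeasure_restrict.2 hs
  .of_bound hf.aestronglyMeasurable B (ae_restrict_of_forall_mem hsm hB)

end Averages

lemma measureReal_ball_pos {X : Type*} [PseudoMetricSpace X] [ProperSpace X]
    [MeasurableSpace X] (μ : Measure X) [μ.IsOpenPosMeasure] [IsFiniteMeasureOnCompacts μ]
    (x : X) {r : ℝ} (hr : 0 < r) : 0 < μ.real (ball x r) :=
  ENNReal.toReal_pos (measure_ball_pos μ x hr).ne' measure_ball_lt_top.ne

section Balls

variable {E : Type*} [NormedAddCommGroup E] [NormedSpace ℝ E]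

lemma ball_midpoint_subset_ball_left (x y : E) :
    ball (midpoint ℝ x y) (dist x y) ⊆ ball x (2 * dist x y) :=
  ball_subset_ball' <| by
    rw [dist_midpoint_left (𝕜 := ℝ)]
    norm_num
    linarith [dist_nonneg (x := x) (y := y)]

lemma ball_midpoint_subset_ball_right (x y : E) :
    ball (midpoint ℝ x y) (dist x y) ⊆ ball y (2 * dist x y) := by
  rw [midpoint_comm, dist_comm]
  exact ball_midpoint_subset_ball_left y x

variable [MeasurableSpace E] [BorelSpace E] [FiniteDimensional ℝ E] (μ : Measure E)
  [μ.IsAddHaarMeasure]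

lemma Measure.addHaar_real_ball_of_pos (x : E) {r : ℝ} (hr : 0 < r) :
    μ.real (ball x r) = r ^ Module.finrank ℝ E * μ.real (ball 0 1) := by
  rw [measureReal_def, Measure.addHaar_ball_of_pos μ x hr, ENNReal.toReal_mul,
    ENNReal.toReal_ofReal (by positivity), measureReal_def]

end Balls

lemma campanato_bound_eq_volume_real_ball_mul_sq {d : ℕ} (z : EuclideanSpace ℝ (Fin d))
    {C R M α : ℝ} (hC : 0 ≤ C) (hR : 0 < R) (hM : 0 < M) :
    C * R ^ d / M ^ (2 * α) = volume.real (ball z R) *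
      (√(C / volume.real (ball (0 : EuclideanSpace ℝ (Fin d)) 1)) / M ^ α) ^ 2 := by
  have hB₁ := measureReal_ball_pos volume (0 : EuclideanSpace ℝ (Fin d)) one_pos
  rw [mul_comm 2 α, Real.rpow_mul hM.le, Real.rpow_two,
    Measure.addHaar_real_ball_of_pos volume z hR, finrank_euclideanSpace_fin, div_pow,
    Real.sq_sqrt (by positivity)]
  field_simp

lemma abs_ballAvg_sub_ballAvg_le_s12 {d : ℕ} {f : EuclideanSpace ℝ (Fin d) → ℝ}
    {x y : EuclideanSpace ℝ (Fin d)} (hxy : x ≠ y) {ε : ℝ} (hε : 0 < ε)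
    (hfx : MemLp f 2 (volume.restrict (ball x (2 * dist x y))))
    (hfy : MemLp f 2 (volume.restrict (ball y (2 * dist x y))))
    (hx : ∫ z in ball x (2 * dist x y), (f z - ballAvg f x (2 * dist x y)) ^ 2 ≤
      volume.real (ball x (2 * dist x y)) * ε ^ 2)
    (hy : ∫ z in ball y (2 * dist x y), (f z - ballAvg f y (2 * dist x y)) ^ 2 ≤
      volume.real (ball y (2 * dist x y)) * ε ^ 2) :
    |ballAvg f x (2 * dist x y) - ballAvg f y (2 * dist x y)| ≤ 2 ^ (d + 1) * ε := by
  set r := dist x y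
  have hr : 0 < r := dist_pos.2 hxy
  set S := ball (midpoint ℝ x y) r
  have hS : 0 < volume.real S := measureReal_ball_pos volume _ hr
  have hdouble (z : EuclideanSpace ℝ (Fin d)) :
      volume.real (ball z (2 * r)) = 2 ^ d * volume.real S := by
    rw [Measure.addHaar_real_ball_of_pos volume z (by positivity : 0 < 2 * r),
      Measure.addHaar_real_ball_of_pos volume _ hr, finrank_euclideanSpace_fin, mul_pow, mul_assoc]
  have := isFiniteMeasure_restrict.2 (measure_ball_lt_top (μ := volume) (x := x) (r := 2 * r)).ne
  have := isFiniteMeasure_restrict.2 (measure_ball_lt_top (μ := volume) (x := y) (r := 2 * r)).ne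
  have hgx := hfx.sub (memLp_const (ballAvg f x (2 * r)))
  have hgy := hfy.sub (memLp_const (ballAvg f y (2 * r)))
  refine le_of_mul_le_mul_left ?_ hS
  calc volume.real S * |ballAvg f x (2 * r) - ballAvg f y (2 * r)|
      ≤ (∫ w in ball x (2 * r), |f w - ballAvg f x (2 * r)|) +
          ∫ w in ball y (2 * r), |f w - ballAvg f y (2 * r)| :=
        measureReal_mul_abs_sub_le (ball_midpoint_subset_ball_left x y)
          (ball_midpoint_subset_ball_right x y) (hgx.integrable one_le_two)
          (hgy.integrable one_le_two)
    _ ≤ volume.real (ball x (2 * r)) * ε + volume.real (ball y (2 * r)) * ε :=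
        add_le_add (setIntegral_abs_le_of_setIntegral_sq_le measure_ball_lt_top.ne hgx hε hx)
          (setIntegral_abs_le_of_setIntegral_sq_le measure_ball_lt_top.ne hgy hε hy)
    _ = volume.real S * (2 ^ (d + 1) * ε) := by
        rw [hdouble x, hdouble y]
        ring

theorem campanato_averages_nearby_points
    (d : ℕ) (C α : ℝ) (hC : 0 < C) (hα : 1 < α) :
    ∃ C''' > (0 : ℝ),
      ∀ (Ω : Set (EuclideanSpace ℝ (Fin d))), IsOpen Ω →
      ∀ (f : EuclideanSpace ℝ (Fin d) → ℝ), Measurable f →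
        (∃ B, ∀ x ∈ Ω, |f x| ≤ B) →
        (∀ x ∈ Ω, ∀ r : ℝ, 0 < r → r < 1 / 2 → Metric.ball x r ⊆ Ω →
          ∫ y in Metric.ball x r, (f y - ballAvg f x r) ^ 2 ≤
            C * r ^ d / |Real.logb 2 r| ^ (2 * α)) →
        ∀ x ∈ Ω, ∀ y ∈ Ω, x ≠ y →
          2 * dist x y < 1 / 2 →
          Metric.ball x (2 * dist x y) ⊆ Ω → Metric.ball y (2 * dist x y) ⊆ Ω →
          |ballAvg f x (2 * dist x y) - ballAvg f y (2 * dist x y)| ≤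
            C''' / |Real.logb 2 (dist x y)| ^ α := by
  set cd := volume.real (ball (0 : EuclideanSpace ℝ (Fin d)) 1)
  have hcd : 0 < cd := measureReal_ball_pos volume 0 one_pos
  refine ⟨2 ^ (d + 1) * 2 ^ α * √(C / cd), by positivity, ?_⟩
  intro Ω _ f hf ⟨B, hB⟩ hCam x hx y hy hxy h2r hbx hby
  set r := dist x y
  have hr : 0 < r := dist_pos.2 hxy
  set M := |Real.logb 2 (2 * r)|
  have hM : 0 < M := one_pos.trans_le (one_le_abs_logb_two_mul hr (by linarith))
  have hmemLp : ∀ z, ball z (2 * r) ⊆ Ω → MemLp f 2 (volume.restrict (ball z (2 * r))) :=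
    fun z hz => memLp_restrict_of_abs_le 2 measure_ball_lt_top.ne measurableSet_ball hf
      fun w hw => hB w (hz hw)
  have hsq : ∀ z ∈ Ω, ball z (2 * r) ⊆ Ω →
      ∫ w in ball z (2 * r), (f w - ballAvg f z (2 * r)) ^ 2 ≤
        volume.real (ball z (2 * r)) * (√(C / cd) / M ^ α) ^ 2 := fun z hz hbz =>
    (hCam z hz _ (by positivity) h2r hbz).trans_eq
      (campanato_bound_eq_volume_real_ball_mul_sq z hC.le (by positivity) hM)
  calc _ ≤ 2 ^ (d + 1) * (√(C / cd) / M ^ α) :=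
        abs_ballAvg_sub_ballAvg_le_s12 hxy (by positivity) (hmemLp x hbx) (hmemLp y hby)
          (hsq x hx hbx) (hsq y hy hby)
    _ = 2 ^ (d + 1) * √(C / cd) * (M ^ α)⁻¹ := by ring
    _ ≤ 2 ^ (d + 1) * √(C / cd) * (2 ^ α / |Real.logb 2 r| ^ α) := by
        gcongr
        exact inv_rpow_abs_logb_two_mul_le hr (by linarith) (by linarith)
    _ = _ := by ring
end
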